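/- arXiv:2508.16824 — 10 statements merged into one kernel-verified Lean document; each statement's English description precedes it below -/
import Mathlib

section
/- Let M̂ and M̃ be n×n real matrices with M̂ ≤ M̃ entrywise, and let q̂, q̃ ∈ ℝⁿ with q̂ ≤ q̃ entrywise. Suppose z̃ solves LCP(M̃, q̃) and ẑ solves LCP(M̂, q̂). If M̃ is an M-matrix or M̂ is an M-matrix, then z̃ ≤ ẑ entrywise. -/
/-!
Complementarity forces `q̃ + M̃ z̃` to vanish wherever `z̃ᵢ > ẑᵢ`; together with the feasibility
of `ẑ` and the entrywise orderings this gives `(M (z̃ - ẑ))ᵢ ≤ 0` at those `i`, for `M` either of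
the two matrices. Since `M` has nonpositive off-diagonal entries, this sign condition passes to
the positive part `w⁺` of `w = z̃ - ẑ` and yields `M w⁺ ≤ 0` in every row; as `M⁻¹ ≥ 0`, we get
`w⁺ = M⁻¹ (M w⁺) ≤ 0`, i.e. `z̃ ≤ ẑ`.
-/

/-- `z` solves the linear complementarity problem LCP(M, q). -/
def SolvesLCP {n : ℕ} (M : Matrix (Fin n) (Fin n) ℝ) (q z : Fin n → ℝ) : Prop :=
  (∀ i, 0 ≤ q i + M.mulVec z i) ∧ (∀ i, 0 ≤ z i) ∧ (∑ i, (q i + M.mulVec z i) * z i) = 0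

/-- An M-matrix: nonpositive off-diagonal entries, invertible, nonnegative inverse. -/
def IsMMatrix {n : ℕ} (M : Matrix (Fin n) (Fin n) ℝ) : Prop :=
  (∀ i j, i ≠ j → M i j ≤ 0) ∧ IsUnit M ∧ (∀ i j, 0 ≤ M⁻¹ i j)

open Matrix

section
variable {ι 𝕜 : Type*} [Fintype ι] [Field 𝕜] [LinearOrder 𝕜] [IsStrictOrderedRing 𝕜]

lemma Matrix.mulVec_le_mulVec_of_le {A B : Matrix ι ι 𝕜} (hAB : ∀ i j, A i j ≤ B i j)
    {z : ι → 𝕜} (hz : ∀ i, 0 ≤ z i) (i : ι) : (A *ᵥ z) i ≤ (B *ᵥ z) i :=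
  Finset.sum_le_sum fun j _ => mul_le_mul_of_nonneg_right (hAB i j) (hz j)

lemma Matrix.nonpos_of_mulVec_nonpos [DecidableEq ι] {M : Matrix ι ι 𝕜} (hU : IsUnit M)
    (hInv : ∀ i j, 0 ≤ M⁻¹ i j) {x : ι → 𝕜} (hx : ∀ i, (M *ᵥ x) i ≤ 0) (i : ι) : x i ≤ 0 := by
  have hx_eq : x = M⁻¹ *ᵥ (M *ᵥ x) := by
    rw [mulVec_mulVec, nonsing_inv_mul _ ((isUnit_iff_isUnit_det M).mp hU), one_mulVec]
  rw [hx_eq]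
  exact Finset.sum_nonpos fun j _ => mul_nonpos_of_nonneg_of_nonpos (hInv i j) (hx j)

lemma Matrix.mulVec_posPart_nonpos {M : Matrix ι ι 𝕜} (hZ : ∀ i j, i ≠ j → M i j ≤ 0)
    {w : ι → 𝕜} (hw : ∀ i, 0 < w i → (M *ᵥ w) i ≤ 0) (i : ι) : (M *ᵥ w⁺) i ≤ 0 := by
  classical
  rcases le_or_gt (w i) 0 with hi | hi
  · refine Finset.sum_nonpos fun j _ => ?_
    by_cases hj : j = i
    · subst hj; simp [posPart_eq_zero.mpr hi]
    · exact mul_nonpos_of_nonpos_of_nonneg (hZ i j (Ne.symm hj)) (posPart_nonneg _)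
  · refine le_trans (Finset.sum_le_sum fun j _ => ?_) (hw i hi)
    by_cases hj : j = i
    · subst hj; simp [posPart_eq_self.mpr hi.le]
    · exact mul_le_mul_of_nonpos_left (le_posPart _) (hZ i j (Ne.symm hj))

end

lemma IsMMatrix.le_of_mulVec_sub_nonpos {n : ℕ} {M : Matrix (Fin n) (Fin n) ℝ} (hM : IsMMatrix M)
    {a b : Fin n → ℝ} (hab : ∀ i, b i < a i → (M *ᵥ (a - b)) i ≤ 0) (i : Fin n) : a i ≤ b i := by
  obtain ⟨hZ, hU, hInv⟩ := hM
  have hpos : (a - b)⁺ i ≤ 0 := nonpos_of_mulVec_nonpos hU hInv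
    (mulVec_posPart_nonpos hZ fun j hj => hab j (sub_pos.mp hj)) i
  have := (le_posPart (a - b)) i
  simp only [Pi.sub_apply] at this
  linarith

lemma SolvesLCP.eq_zero_of_pos {n : ℕ} {M : Matrix (Fin n) (Fin n) ℝ} {q z : Fin n → ℝ}
    (h : SolvesLCP M q z) {i : Fin n} (hi : 0 < z i) : q i + (M *ᵥ z) i = 0 := by
  obtain ⟨hw, hz, hcomp⟩ := h
  have := (Finset.sum_eq_zero_iff_of_nonneg fun j _ => mul_nonneg (hw j) (hz j)).mp hcomp i
    (Finset.mem_univ i)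
  exact (mul_eq_zero.mp this).resolve_right hi.ne'

theorem stmt0 {n : ℕ} (Mhat Mtil : Matrix (Fin n) (Fin n) ℝ) (qhat qtil zhat ztil : Fin n → ℝ)
    (hM : ∀ i j, Mhat i j ≤ Mtil i j) (hq : ∀ i, qhat i ≤ qtil i)
    (hZtil : SolvesLCP Mtil qtil ztil) (hZhat : SolvesLCP Mhat qhat zhat)
    (hMM : IsMMatrix Mtil ∨ IsMMatrix Mhat) :
    ∀ i, ztil i ≤ zhat i := by
  have key : ∀ i, zhat i < ztil i → (Mtil *ᵥ ztil) i ≤ (Mhat *ᵥ zhat) i := fun i hi => by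
    have := hZtil.eq_zero_of_pos ((hZhat.2.1 i).trans_lt hi)
    linarith [hZhat.1 i, hq i]
  rcases hMM with hMM | hMM
  · refine hMM.le_of_mulVec_sub_nonpos fun i hi => ?_
    rw [mulVec_sub, Pi.sub_apply]
    linarith [key i hi, mulVec_le_mulVec_of_le hM hZhat.2.1 i]
  · refine hMM.le_of_mulVec_sub_nonpos fun i hi => ?_
    rw [mulVec_sub, Pi.sub_apply]
    linarith [key i hi, mulVec_le_mulVec_of_le hM hZtil.2.1 i]
end

section
/- Let M̂ and M̃ be n×n real matrices with M̂ ≤ M̃ entrywise, and let q̂, q̃ ∈ ℝⁿ with q̂ ≤ q̃ entrywise. Suppose z̃ solves LCP(M̃, q̃) and ẑ solves LCP(M̂, q̂). Assume z̃ > 0 entrywise and that there exist indices i₀, j₀ with m̂_{i₀j₀} < m̃_{i₀j₀}, or there exists i₀ with q̂_{i₀} < q̃_{i₀}. If M̃ is invertible with all entries of M̃⁻¹ positive, or M̂ is invertible with all entries of M̂⁻¹ positive, then z̃ < ẑ entrywise. -/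
open Matrix

section PositiveInverse

variable {m ι 𝕜 : Type*} [Fintype ι] [CommRing 𝕜] [PartialOrder 𝕜] [IsStrictOrderedRing 𝕜]

theorem Matrix.mulVec_pos_of_forall_pos {B : Matrix m ι 𝕜} (hB : ∀ i j, 0 < B i j)
    {y : ι → 𝕜} (hy : 0 < y) (i : m) : 0 < (B *ᵥ y) i := by
  obtain ⟨hy_nonneg, k, hk⟩ := Pi.lt_def.1 hy
  exact Finset.sum_pos' (fun j _ => mul_nonneg (hB i j).le (hy_nonneg j))
    ⟨k, Finset.mem_univ k, mul_pos (hB i k) hk⟩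

theorem Matrix.pos_of_mulVec_pos_of_inv_pos [DecidableEq ι] {A : Matrix ι ι 𝕜} (hA : IsUnit A)
    (hA_inv : ∀ i j, 0 < A⁻¹ i j) {x : ι → 𝕜} (hx : 0 < A *ᵥ x) (i : ι) : 0 < x i := by
  have hx_eq : x = A⁻¹ *ᵥ (A *ᵥ x) := by
    rw [mulVec_mulVec, nonsing_inv_mul A ((isUnit_iff_isUnit_det A).1 hA), one_mulVec]
  rw [hx_eq]
  exact mulVec_pos_of_forall_pos hA_inv hx i

end PositiveInverse

section Perturbation

variable {ι 𝕜 : Type*} [Fintype ι] [CommRing 𝕜] [PartialOrder 𝕜] [IsStrictOrderedRing 𝕜]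
  {M N : Matrix ι ι 𝕜} {p q w z : ι → 𝕜}

theorem perturbed_slack_nonneg (hM : ∀ i j, N i j ≤ M i j) (hq : ∀ i, p i ≤ q i) (hw : 0 ≤ w)
    (hz : 0 ≤ z) : 0 ≤ w + (q - p) + (M - N) *ᵥ z := fun i =>
  add_nonneg (add_nonneg (hw i) (sub_nonneg.2 (hq i)))
    (Finset.sum_nonneg fun j _ => mul_nonneg (sub_nonneg.2 (hM i j)) (hz j))

theorem perturbed_slack_pos (hM : ∀ i j, N i j ≤ M i j) (hq : ∀ i, p i ≤ q i) (hw : 0 ≤ w)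
    (hz : ∀ j, 0 < z j) (hstrict : (∃ i j, N i j < M i j) ∨ (∃ i, p i < q i)) :
    0 < w + (q - p) + (M - N) *ᵥ z := by
  have hnonneg := perturbed_slack_nonneg hM hq hw fun j => (hz j).le
  refine Pi.lt_def.2 ⟨hnonneg, ?_⟩
  rcases hstrict with ⟨i, j, hij⟩ | ⟨i, hi⟩
  · refine ⟨i, add_pos_of_nonneg_of_pos (add_nonneg (hw i) (sub_nonneg.2 (hq i))) ?_⟩
    exact Finset.sum_pos' (fun k _ => mul_nonneg (sub_nonneg.2 (hM i k)) (hz k).le)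
      ⟨j, Finset.mem_univ j, mul_pos (sub_pos.2 hij) (hz j)⟩
  · refine ⟨i, add_pos_of_pos_of_nonneg (add_pos_of_nonneg_of_pos (hw i) (sub_pos.2 hi)) ?_⟩
    exact Finset.sum_nonneg fun k _ => mul_nonneg (sub_nonneg.2 (hM i k)) (hz k).le

end Perturbation

theorem SolvesLCP.slack_eq_zero_of_pos {n : ℕ} {M : Matrix (Fin n) (Fin n) ℝ} {q z : Fin n → ℝ}
    (h : SolvesLCP M q z) (hz : ∀ i, 0 < z i) : q + M *ᵥ z = 0 := by
  obtain ⟨hw, hz_nonneg, hcompl⟩ := h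
  funext i
  have hterm := (Finset.sum_eq_zero_iff_of_nonneg
    fun j _ => mul_nonneg (hw j) (hz_nonneg j)).1 hcompl i (Finset.mem_univ i)
  exact (mul_eq_zero.1 hterm).resolve_right (hz i).ne'

theorem stmt1 {n : ℕ} (Mhat Mtil : Matrix (Fin n) (Fin n) ℝ) (qhat qtil zhat ztil : Fin n → ℝ)
    (hM : ∀ i j, Mhat i j ≤ Mtil i j) (hq : ∀ i, qhat i ≤ qtil i)
    (hZtil : SolvesLCP Mtil qtil ztil) (hZhat : SolvesLCP Mhat qhat zhat)
    (hpos : ∀ i, 0 < ztil i)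
    (hstrict : (∃ i₀ j₀, Mhat i₀ j₀ < Mtil i₀ j₀) ∨ (∃ i₀, qhat i₀ < qtil i₀))
    (hinv : (IsUnit Mtil ∧ ∀ i j, 0 < Mtil⁻¹ i j) ∨ (IsUnit Mhat ∧ ∀ i j, 0 < Mhat⁻¹ i j)) :
    ∀ i, ztil i < zhat i := by
  have htil := hZtil.slack_eq_zero_of_pos hpos
  have hw : 0 ≤ qhat + Mhat *ᵥ zhat := hZhat.1
  have hslack (A : Matrix (Fin n) (Fin n) ℝ) (z : Fin n → ℝ)
      (hA : A *ᵥ (zhat - ztil) = (qhat + Mhat *ᵥ zhat) + (qtil - qhat) + (Mtil - Mhat) *ᵥ z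
        - (qtil + Mtil *ᵥ ztil)) :
      A *ᵥ (zhat - ztil) = (qhat + Mhat *ᵥ zhat) + (qtil - qhat) + (Mtil - Mhat) *ᵥ z := by
    rw [hA, htil, sub_zero]
  suffices h : ∀ i, 0 < (zhat - ztil) i from fun i => sub_pos.1 (h i)
  rcases hinv with ⟨hU, hU_inv⟩ | ⟨hU, hU_inv⟩
  · refine pos_of_mulVec_pos_of_inv_pos hU hU_inv ?_
    have hx := hslack Mtil zhat (by simp only [mulVec_sub, sub_mulVec]; abel)
    rw [hx]
    refine lt_of_le_of_ne (perturbed_slack_nonneg hM hq hw hZhat.2.1) fun h0 => ?_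
    have hz : zhat = ztil := sub_eq_zero.1 <| mulVec_injective_of_isUnit hU <| by
      rw [hx, ← h0, mulVec_zero]
    exact (perturbed_slack_pos hM hq hw hpos hstrict).ne (hz ▸ h0)
  · refine pos_of_mulVec_pos_of_inv_pos hU hU_inv ?_
    rw [hslack Mhat ztil (by simp only [mulVec_sub, sub_mulVec]; abel)]
    exact perturbed_slack_pos hM hq hw hpos hstrict
end

section
/- Let M̂ and M̃ be n×n real matrices with M̂ ≤ M̃ entrywise, and let q̂, q̃ ∈ ℝⁿ with q̂ ≤ q̃ entrywise. Suppose z̃ solves LCP(M̃, q̃) and ẑ solves LCP(M̂, q̂). Assume q̃ = −M̃ z̃ and that there exists an index i₀ with q̂_{i₀} < q̃_{i₀}. If M̃ is invertible with all entries of M̃⁻¹ positive, or M̂ is invertible with all entries of M̂⁻¹ positive, then z̃ < ẑ entrywise. -/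
/-!
Put `d = ẑ - z̃`. Feasibility of `ẑ`, the identity `M̃ z̃ = -q̃` and the comparisons
`M̂ ≤ M̃`, `q̂ ≤ q̃` give `M̃ z̃ = -q̃ ≤ -q̂ ≤ M̂ ẑ ≤ M̃ ẑ` and `M̂ z̃ ≤ M̃ z̃ = -q̃ ≤ -q̂ ≤ M̂ ẑ`,
both strict at `i₀`. So `A d ≥ 0` with `(A d) i₀ > 0` for `A = M̃` and for `A = M̂`, and
`d = A⁻¹ (A d)` is entrywise positive whenever `A⁻¹` is.
-/

namespace Matrix

variable {m n R : Type*} [Fintype n]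

theorem mulVec_le_mulVec_of_le_of_nonneg [Semiring R] [PartialOrder R] [IsOrderedRing R]
    {A B : Matrix m n R} (hAB : ∀ i j, A i j ≤ B i j) {x : n → R} (hx : 0 ≤ x) :
    A *ᵥ x ≤ B *ᵥ x :=
  fun i => dotProduct_le_dotProduct_of_nonneg_right (hAB i) hx

theorem mulVec_pos_of_pos_of_nonneg [Semiring R] [PartialOrder R] [IsStrictOrderedRing R]
    {A : Matrix m n R} (hA : ∀ i j, 0 < A i j) {x : n → R} (hx : 0 ≤ x) {j₀ : n}
    (hj₀ : 0 < x j₀) (i : m) : 0 < (A *ᵥ x) i :=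
  Finset.sum_pos' (fun j _ => mul_nonneg (hA i j).le (hx j))
    ⟨j₀, Finset.mem_univ _, mul_pos (hA i j₀) hj₀⟩

theorem lt_of_mulVec_le_of_inv_pos [DecidableEq n] [CommRing R] [PartialOrder R]
    [IsStrictOrderedRing R] {A : Matrix n n R} (hA : IsUnit A) (hinv : ∀ i j, 0 < A⁻¹ i j)
    {x y : n → R} (hle : A *ᵥ x ≤ A *ᵥ y) {i₀ : n} (hlt : (A *ᵥ x) i₀ < (A *ᵥ y) i₀) (i : n) :
    x i < y i := by
  have hyx : y - x = A⁻¹ *ᵥ (A *ᵥ (y - x)) := by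
    rw [mulVec_mulVec, nonsing_inv_mul A ((isUnit_iff_isUnit_det A).mp hA), one_mulVec]
  have hd : 0 < (y - x) i := by
    rw [hyx, mulVec_sub]
    exact mulVec_pos_of_pos_of_nonneg hinv (sub_nonneg.mpr hle) (sub_pos.mpr hlt) i
  exact sub_pos.mp hd

end Matrix

open Matrix in
theorem stmt2 {n : ℕ} (Mhat Mtil : Matrix (Fin n) (Fin n) ℝ) (qhat qtil zhat ztil : Fin n → ℝ)
    (hM : ∀ i j, Mhat i j ≤ Mtil i j) (hq : ∀ i, qhat i ≤ qtil i)
    (hZtil : SolvesLCP Mtil qtil ztil) (hZhat : SolvesLCP Mhat qhat zhat)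
    (hqeq : qtil = -(Mtil.mulVec ztil))
    (hstrict : ∃ i₀, qhat i₀ < qtil i₀)
    (hinv : (IsUnit Mtil ∧ ∀ i j, 0 < Mtil⁻¹ i j) ∨ (IsUnit Mhat ∧ ∀ i j, 0 < Mhat⁻¹ i j)) :
    ∀ i, ztil i < zhat i := by
  obtain ⟨i₀, hi₀⟩ := hstrict
  have hfeas (i : Fin n) : -qhat i ≤ (Mhat *ᵥ zhat) i := by linarith [hZhat.1 i]
  have htil (i : Fin n) : (Mtil *ᵥ ztil) i = -qtil i := by simp [hqeq]
  have hzhat := mulVec_le_mulVec_of_le_of_nonneg hM hZhat.2.1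
  have hztil := mulVec_le_mulVec_of_le_of_nonneg hM hZtil.2.1
  rcases hinv with ⟨hU, hpos⟩ | ⟨hU, hpos⟩
  · refine lt_of_mulVec_le_of_inv_pos hU hpos (i₀ := i₀) (fun i => ?_) ?_
    · linarith [htil i, hq i, hfeas i, hzhat i]
    · linarith [htil i₀, hfeas i₀, hzhat i₀]
  · refine lt_of_mulVec_le_of_inv_pos hU hpos (i₀ := i₀) (fun i => ?_) ?_
    · linarith [hztil i, htil i, hq i, hfeas i]
    · linarith [hztil i₀, htil i₀, hfeas i₀]
end

section
/- Let M and A be n×n real matrices, both with nonpositive off-diagonal entries, satisfying M ≤ A entrywise. If M is an M-matrix, then A is an M-matrix, and moreover A⁻¹ ≤ M⁻¹ entrywise. -/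
open Matrix

namespace Matrix

section OrderedSemiring

variable {ι R : Type*} [Fintype ι] [Semiring R] [PartialOrder R] [IsOrderedRing R]

theorem mul_apply_nonneg {l m : Type*} {A : Matrix l ι R} {B : Matrix ι m R}
    (hA : ∀ i j, 0 ≤ A i j) (hB : ∀ i j, 0 ≤ B i j) (i : l) (j : m) : 0 ≤ (A * B) i j :=
  Finset.sum_nonneg fun k _ => mul_nonneg (hA i k) (hB k j)

theorem mulVec_le_mulVec_of_le_s3 {M A : Matrix ι ι R} (hle : ∀ i j, M i j ≤ A i j)
    {x : ι → R} (hx : 0 ≤ x) : M *ᵥ x ≤ A *ᵥ x :=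
  fun i => dotProduct_le_dotProduct_of_nonneg_right (hle i) hx

theorem mulVec_apply_nonpos_of_apply_eq_zero {A : Matrix ι ι R}
    (hA : ∀ i j, i ≠ j → A i j ≤ 0) {z : ι → R} (hz : 0 ≤ z) {i : ι} (hzi : z i = 0) :
    (A *ᵥ z) i ≤ 0 := by
  refine Finset.sum_nonpos fun j _ => ?_
  rcases eq_or_ne i j with rfl | hij
  · simp [hzi]
  · exact mul_nonpos_of_nonpos_of_nonneg (hA i j hij) (hz j)

end OrderedSemiring

variable {ι 𝕜 : Type*} [Fintype ι] [Field 𝕜] [LinearOrder 𝕜] [IsStrictOrderedRing 𝕜]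

theorem nonneg_of_mulVec_nonneg {A : Matrix ι ι 𝕜} (hA : ∀ i j, i ≠ j → A i j ≤ 0)
    {x : ι → 𝕜} (hx : ∀ i, 0 < x i) (hAx : ∀ i, 0 < (A *ᵥ x) i)
    {y : ι → 𝕜} (hy : 0 ≤ A *ᵥ y) : 0 ≤ y := by
  intro i
  have : Nonempty ι := ⟨i⟩
  obtain ⟨i₀, -, hmin⟩ :=
    Finset.exists_min_image Finset.univ (fun j => y j / x j) Finset.univ_nonempty
  set c := y i₀ / x i₀
  have hcx : ∀ j, c * x j ≤ y j := fun j =>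
    (le_div_iff₀ (hx j)).mp (hmin j (Finset.mem_univ j))
  have hc : 0 ≤ c := by
    by_contra! hc
    have htouch : (A *ᵥ (y - c • x)) i₀ ≤ 0 :=
      mulVec_apply_nonpos_of_apply_eq_zero hA (fun j => by simpa using hcx j)
        (by simp [c, div_mul_cancel₀ _ (hx i₀).ne'])
    rw [mulVec_sub, mulVec_smul, Pi.sub_apply, Pi.smul_apply, smul_eq_mul] at htouch
    have hyi₀ : 0 ≤ (A *ᵥ y) i₀ := hy i₀
    linarith [mul_neg_of_neg_of_pos hc (hAx i₀)]
  simpa using (mul_nonneg hc (hx i).le).trans (hcx i)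

variable [DecidableEq ι]

theorem inv_mulVec_one_pos {M : Matrix ι ι 𝕜} (hM : IsUnit M) (hMinv : ∀ i j, 0 ≤ M⁻¹ i j)
    (i : ι) : 0 < (M⁻¹ *ᵥ 1) i := by
  have hrow : ∑ j, M⁻¹ i j ≠ 0 := by
    intro hsum
    have hzero := (Finset.sum_eq_zero_iff_of_nonneg fun j _ => hMinv i j).mp hsum
    have hii : (M⁻¹ * M) i i = 1 := by
      rw [nonsing_inv_mul M ((isUnit_iff_isUnit_det M).mp hM), one_apply_eq]
    simp [mul_apply, hzero] at hii
  simpa [mulVec, dotProduct] using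
    (Finset.sum_nonneg fun j _ => hMinv i j).lt_of_ne' hrow

theorem isUnit_of_mulVec_nonneg_imp_nonneg {A : Matrix ι ι 𝕜}
    (hA : ∀ y, 0 ≤ A *ᵥ y → 0 ≤ y) : IsUnit A := by
  refine mulVec_injective_iff_isUnit.mp <| (injective_iff_map_eq_zero A.mulVecLin).mpr ?_
  intro y hy
  change A *ᵥ y = 0 at hy
  have hpos : 0 ≤ y := hA y hy.ge
  have hneg : 0 ≤ -y := hA (-y) (by simp [mulVec_neg, hy])
  exact le_antisymm (neg_nonneg.mp hneg) hpos

theorem inv_apply_nonneg_of_mulVec_nonneg_imp_nonneg {A : Matrix ι ι 𝕜}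
    (hA : ∀ y, 0 ≤ A *ᵥ y → 0 ≤ y) (i j : ι) : 0 ≤ A⁻¹ i j := by
  have hdet := (isUnit_iff_isUnit_det A).mp (isUnit_of_mulVec_nonneg_imp_nonneg hA)
  have hcol : A *ᵥ (A⁻¹ *ᵥ Pi.single j 1) = Pi.single j 1 := by
    rw [mulVec_mulVec, mul_nonsing_inv A hdet, one_mulVec]
  have := hA _ (hcol ▸ Pi.single_nonneg.mpr zero_le_one) i
  simpa [mulVec_single_one] using this

theorem inv_apply_le_inv_apply_of_le {M A : Matrix ι ι 𝕜} (hM : IsUnit M) (hA : IsUnit A)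
    (hMinv : ∀ i j, 0 ≤ M⁻¹ i j) (hAinv : ∀ i j, 0 ≤ A⁻¹ i j) (hle : ∀ i j, M i j ≤ A i j)
    (i j : ι) : A⁻¹ i j ≤ M⁻¹ i j := by
  have hdiff : M⁻¹ * (A - M) * A⁻¹ = M⁻¹ - A⁻¹ := by
    rw [Matrix.mul_sub, Matrix.sub_mul, Matrix.mul_assoc,
      mul_nonsing_inv A ((isUnit_iff_isUnit_det A).mp hA), Matrix.mul_one,
      nonsing_inv_mul M ((isUnit_iff_isUnit_det M).mp hM), Matrix.one_mul]
  have hnonneg : 0 ≤ (M⁻¹ * (A - M) * A⁻¹) i j :=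
    mul_apply_nonneg (mul_apply_nonneg hMinv fun k l => sub_nonneg.mpr (hle k l)) hAinv i j
  rw [hdiff, sub_apply] at hnonneg
  exact sub_nonneg.mp hnonneg

end Matrix

theorem stmt3_general {n : ℕ} (M A : Matrix (Fin n) (Fin n) ℝ)
    (hAZ : ∀ i j, i ≠ j → A i j ≤ 0)
    (hle : ∀ i j, M i j ≤ A i j) (hMM : IsMMatrix M) :
    IsMMatrix A ∧ ∀ i j, A⁻¹ i j ≤ M⁻¹ i j := by
  obtain ⟨-, hMunit, hMinv⟩ := hMM
  set x := M⁻¹ *ᵥ 1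
  have hx : ∀ i, 0 < x i := inv_mulVec_one_pos hMunit hMinv
  have hMx : M *ᵥ x = 1 := by
    rw [mulVec_mulVec, mul_nonsing_inv M ((isUnit_iff_isUnit_det M).mp hMunit), one_mulVec]
  have hAx : ∀ i, 0 < (A *ᵥ x) i := fun i => calc
    0 < (M *ᵥ x) i := by simp [hMx]
    _ ≤ (A *ᵥ x) i := mulVec_le_mulVec_of_le_s3 hle (fun j => (hx j).le) i
  have hmax : ∀ y, 0 ≤ A *ᵥ y → 0 ≤ y := fun _ => nonneg_of_mulVec_nonneg hAZ hx hAx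
  have hAunit := isUnit_of_mulVec_nonneg_imp_nonneg hmax
  have hAinv := inv_apply_nonneg_of_mulVec_nonneg_imp_nonneg hmax
  exact ⟨⟨hAZ, hAunit, hAinv⟩, inv_apply_le_inv_apply_of_le hMunit hAunit hMinv hAinv hle⟩

theorem stmt3 {n : ℕ} (M A : Matrix (Fin n) (Fin n) ℝ)
    (hMZ : ∀ i j, i ≠ j → M i j ≤ 0) (hAZ : ∀ i j, i ≠ j → A i j ≤ 0)
    (hle : ∀ i j, M i j ≤ A i j) (hMM : IsMMatrix M) :
    IsMMatrix A ∧ ∀ i j, A⁻¹ i j ≤ M⁻¹ i j :=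
  stmt3_general M A hAZ hle hMM
end

section
/- An n×n real matrix M is a P-matrix if and only if for every q ∈ ℝⁿ the linear complementarity problem LCP(M, q) has exactly one solution. -/
/-- A P-matrix: all principal minors (over nonempty index subsets) are positive. -/
def IsPMatrix {n : ℕ} (M : Matrix (Fin n) (Fin n) ℝ) : Prop :=
  ∀ s : Finset (Fin n), s.Nonempty →
    0 < (M.submatrix (fun i : s => (i : Fin n)) (fun j : s => (j : Fin n))).det

/-!
The proof goes through the Fiedler–Pták characterisation: `M` is a P-matrix iff the only vector
whose sign it reverses (`x i * (M *ᵥ x) i ≤ 0` for all `i`) is `0`.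

* If `x ≠ 0` is sign-reversed, then on the support of `x` some `A + D` with `A` a principal
  submatrix and `D ≥ 0` diagonal kills `x`; but `det (A + D) > 0`, since the determinant is affine
  in each diagonal entry with slope a smaller principal minor.
* If a principal minor is `≤ 0`, that principal submatrix has a real eigenvalue `≤ 0`
  (its characteristic polynomial changes sign on `(-∞, 0]`), and the eigenvector extended by zero
  is sign-reversed.

The difference of two solutions of LCP(M, q) is sign-reversed, which gives uniqueness; conversely,
a sign-reversed `x` makes `x⁺` and `x⁻` two solutions for `q = -(M x⁺ ⊓ M x⁻)`.

Existence is by induction on `n`. Prescribing the last coordinate `t ≥ 0` and solving the smaller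
problem leaves a residual `F t` in the last row. Solutions of a P-matrix LCP depend continuously on
`q`: uniqueness at `q = 0` and homogeneity bound them by `C ‖q‖` (by compactness of the sphere), and
their graph is closed. So `F` is continuous; by homogeneity `F t` grows like `t` times a positive
slope, and the intermediate value theorem produces a complementary `t`.
-/

open Matrix Filter Topology

namespace Matrix

variable {ι κ R : Type*} [Fintype ι]

theorem det_add_diagonal_single [DecidableEq ι] [CommRing R] (B : Matrix ι ι R) (i : ι) (t : R) :
    (B + diagonal (Pi.single i t)).det = B.det + t * adjugate B i i := by
  have hrow : B + diagonal (Pi.single i t) = B.updateRow i (B i + t • Pi.single i 1) := by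
    ext j l
    by_cases hj : j = i
    · subst hj
      by_cases hl : j = l <;> simp [*, eq_comm]
    · simp [hj, diagonal_apply]
  rw [hrow, det_updateRow_add, updateRow_eq_self, det_updateRow_smul, adjugate_apply]

theorem submatrix_mulVec_comp [Fintype κ] [NonUnitalNonAssocSemiring R] (M : Matrix ι ι R)
    {g : κ → ι} (hg : g.Injective) {x : ι → R} (hx : ∀ i ∉ Set.range g, x i = 0) :
    M.submatrix g g *ᵥ (x ∘ g) = (M *ᵥ x) ∘ g := by
  ext j
  exact Fintype.sum_of_injective g hg _ _ (fun i hi => by simp [hx i hi]) fun _ => rfl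

theorem exists_mulVec_eq_smul_of_det_nonpos [DecidableEq ι] [Nonempty ι] {A : Matrix ι ι ℝ}
    (hA : A.det ≤ 0) : ∃ μ ≤ (0 : ℝ), ∃ y ≠ 0, A *ᵥ y = μ • y := by
  set p := (-A).charpoly
  have hp : ∀ t, p.eval t = (scalar ι t + A).det := fun t => by
    rw [eval_charpoly, sub_neg_eq_add]
  have htop : Tendsto (fun t => p.eval t) atTop atTop :=
    Polynomial.tendsto_atTop_of_leadingCoeff_nonneg _
      (by rw [charpoly_degree_eq_dim]; exact_mod_cast Fintype.card_pos)
      (by rw [(charpoly_monic _).leadingCoeff]; exact zero_le_one)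
  obtain ⟨t, ht, hpt⟩ := intermediate_value_Ici p.continuous.continuousOn htop
    (show p.eval 0 ≤ 0 by simpa [hp] using hA)
  obtain ⟨y, hy, hAy⟩ := exists_mulVec_eq_zero_iff.mpr ((hp t).symm.trans hpt)
  refine ⟨-t, neg_nonpos.mpr ht, y, hy, ?_⟩
  rw [add_mulVec, scalar_apply, ← smul_one_eq_diagonal, smul_mulVec, one_mulVec] at hAy
  rw [neg_smul, eq_neg_iff_add_eq_zero, add_comm, hAy]

theorem mulVec_snoc [NonUnitalNonAssocSemiring R] {n : ℕ} (M : Matrix (Fin (n + 1)) (Fin (n + 1)) R)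
    (z : Fin n → R) (t : R) (i : Fin (n + 1)) :
    (M *ᵥ Fin.snoc z t) i = ∑ j, M i j.castSucc * z j + M i (Fin.last n) * t := by
  simp [mulVec, dotProduct, Fin.sum_univ_castSucc]

theorem mulVec_snoc_castSucc [NonUnitalNonAssocSemiring R] {n : ℕ}
    (M : Matrix (Fin (n + 1)) (Fin (n + 1)) R) (z : Fin n → R) (t : R) (i : Fin n) :
    (M *ᵥ Fin.snoc z t) i.castSucc =
      (M.submatrix Fin.castSucc Fin.castSucc *ᵥ z) i + M i.castSucc (Fin.last n) * t := by
  rw [mulVec_snoc]; rfl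

end Matrix

variable {n : ℕ} {M : Matrix (Fin n) (Fin n) ℝ} {q x z z₁ z₂ : Fin n → ℝ}

def ReversesSign (M : Matrix (Fin n) (Fin n) ℝ) (x : Fin n → ℝ) : Prop :=
  ∀ i, x i * (M *ᵥ x) i ≤ 0

theorem solvesLCP_iff : SolvesLCP M q z ↔
    ∀ i, 0 ≤ q i + (M *ᵥ z) i ∧ 0 ≤ z i ∧ (q i + (M *ᵥ z) i) * z i = 0 := by
  refine ⟨fun ⟨hw, hz, hsum⟩ i => ⟨hw i, hz i, ?_⟩, fun h =>
    ⟨fun i => (h i).1, fun i => (h i).2.1, Finset.sum_eq_zero fun i _ => (h i).2.2⟩⟩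
  exact (Finset.sum_eq_zero_iff_of_nonneg fun j _ => mul_nonneg (hw j) (hz j)).1 hsum i
    (Finset.mem_univ i)

theorem solvesLCP_zero_zero : SolvesLCP M 0 0 := by
  simp [SolvesLCP]

theorem SolvesLCP.smul (h : SolvesLCP M q z) {c : ℝ} (hc : 0 ≤ c) :
    SolvesLCP M (c • q) (c • z) := by
  rw [solvesLCP_iff] at h ⊢
  intro i
  obtain ⟨hw, hz, hwz⟩ := h i
  simp only [mulVec_smul, Pi.smul_apply, smul_eq_mul, ← mul_add]
  exact ⟨mul_nonneg hc hw, mul_nonneg hc hz, by rw [mul_mul_mul_comm, hwz, mul_zero]⟩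

theorem isClosed_setOf_solvesLCP (M : Matrix (Fin n) (Fin n) ℝ) :
    IsClosed {p : (Fin n → ℝ) × (Fin n → ℝ) | SolvesLCP M p.1 p.2} := by
  simp only [SolvesLCP, Set.ofPred_and, Set.ofPred_forall]
  refine .inter (isClosed_iInter fun i => isClosed_le ?_ ?_)
    (.inter (isClosed_iInter fun i => isClosed_le ?_ ?_) (isClosed_eq ?_ ?_)) <;> fun_prop

theorem SolvesLCP.snoc {M : Matrix (Fin (n + 1)) (Fin (n + 1)) ℝ} {q : Fin (n + 1) → ℝ} {t : ℝ}
    (hz : SolvesLCP (M.submatrix Fin.castSucc Fin.castSucc)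
      (Fin.init q + t • Fin.init fun i => M i (Fin.last n)) z) (ht : 0 ≤ t)
    (hw : 0 ≤ q (Fin.last n) + (M *ᵥ Fin.snoc z t) (Fin.last n))
    (hwt : (q (Fin.last n) + (M *ᵥ Fin.snoc z t) (Fin.last n)) * t = 0) :
    SolvesLCP M q (Fin.snoc z t) := by
  rw [solvesLCP_iff] at hz ⊢
  intro i
  induction i using Fin.lastCases with
  | last => simpa only [Fin.snoc_last] using ⟨hw, ht, hwt⟩
  | cast j =>
    have hj : q j.castSucc + (M *ᵥ Fin.snoc z t) j.castSucc =
        (Fin.init q + t • Fin.init fun i => M i (Fin.last n)) j +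
          (M.submatrix Fin.castSucc Fin.castSucc *ᵥ z) j := by
      rw [mulVec_snoc_castSucc]
      simp only [Pi.add_apply, Pi.smul_apply, smul_eq_mul, Fin.init]
      ring
    simpa [hj] using hz j

theorem SolvesLCP.reversesSign_sub (h₁ : SolvesLCP M q z₁) (h₂ : SolvesLCP M q z₂) :
    ReversesSign M (z₁ - z₂) := by
  intro i
  obtain ⟨hw₁, hz₁, hwz₁⟩ := solvesLCP_iff.1 h₁ i
  obtain ⟨hw₂, hz₂, hwz₂⟩ := solvesLCP_iff.1 h₂ i
  rw [mulVec_sub, Pi.sub_apply, Pi.sub_apply]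
  nlinarith [mul_nonneg hw₁ hz₂, mul_nonneg hw₂ hz₁]

theorem ReversesSign.neg (h : ReversesSign M x) : ReversesSign M (-x) := fun i => by
  simpa [mulVec_neg] using h i

theorem ReversesSign.solvesLCP_posPart (h : ReversesSign M x) :
    SolvesLCP M (-(M *ᵥ x⁺ ⊓ M *ᵥ x⁻)) x⁺ := by
  rw [solvesLCP_iff]
  intro i
  have hw : 0 ≤ -(M *ᵥ x⁺ ⊓ M *ᵥ x⁻) i + (M *ᵥ x⁺) i := by
    simp only [Pi.inf_apply]
    linarith [inf_le_left (a := (M *ᵥ x⁺) i) (b := (M *ᵥ x⁻) i)]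
  refine ⟨hw, posPart_nonneg _, ?_⟩
  rcases le_or_gt (x i) 0 with hx | hx
  · simp [posPart_eq_zero.2 hx]
  · have hMx : (M *ᵥ x⁺) i ≤ (M *ᵥ x⁻) i := by
      have := nonpos_of_mul_nonpos_right (h i) hx
      rwa [← posPart_sub_negPart x, mulVec_sub, Pi.sub_apply, sub_nonpos] at this
    simp [inf_eq_left.2 hMx]

theorem ReversesSign.solvesLCP_negPart (h : ReversesSign M x) :
    SolvesLCP M (-(M *ᵥ x⁺ ⊓ M *ᵥ x⁻)) x⁻ := by
  simpa [inf_comm] using h.neg.solvesLCP_posPart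

namespace IsPMatrix

theorem det_pos (hM : IsPMatrix M) : 0 < M.det := by
  rcases isEmpty_or_nonempty (Fin n) with hn | hn
  · simp
  · have := hM _ Finset.univ_nonempty
    rwa [← det_submatrix_equiv_self (Equiv.subtypeUnivEquiv Finset.mem_univ).symm] at this

theorem submatrix (hM : IsPMatrix M) {m : ℕ} {f : Fin m → Fin n} (hf : f.Injective) :
    IsPMatrix (M.submatrix f f) := fun t ht => by
  have := hM _ (ht.map (f := ⟨f, hf⟩))
  rwa [← det_submatrix_equiv_self (t.equivMap ⟨f, hf⟩)] at this

theorem det_add_diagonal_pos {m : ℕ} {A : Matrix (Fin m) (Fin m) ℝ} (hA : IsPMatrix A)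
    {d : Fin m → ℝ} (hd : 0 ≤ d) : 0 < (A + diagonal d).det := by
  induction m with
  | zero => simp
  | succ m ih =>
    suffices ∀ T : Finset (Fin (m + 1)), 0 < (A + diagonal (∑ i ∈ T, Pi.single i (d i))).det by
      simpa [Finset.univ_sum_single] using this Finset.univ
    intro T
    induction T using Finset.induction_on with
    | empty => simpa using hA.det_pos
    | insert i T hi hT =>
      set e := ∑ j ∈ T, Pi.single j (d j)
      have he : 0 ≤ e := Finset.sum_nonneg fun j _ => Pi.single_nonneg.2 (hd j)
      have hminor : 0 < ((A + diagonal e).submatrix i.succAbove i.succAbove).det := by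
        rw [submatrix_add, Pi.add_apply, Pi.add_apply,
          submatrix_diagonal _ _ Fin.succAbove_right_injective]
        exact ih (hA.submatrix Fin.succAbove_right_injective) fun j => he _
      have hsplit : diagonal (∑ j ∈ insert i T, Pi.single j (d j)) =
          diagonal e + diagonal (Pi.single i (d i)) := by
        rw [Finset.sum_insert hi, diagonal_add]
        exact congrArg diagonal (add_comm _ _)
      rw [hsplit, ← add_assoc, det_add_diagonal_single,
        adjugate_fin_succ_eq_det_submatrix, Even.neg_one_pow ⟨i, rfl⟩, one_mul]
      exact add_pos_of_pos_of_nonneg hT (mul_nonneg (hd i) hminor.le)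

theorem eq_zero_of_reversesSign (hM : IsPMatrix M) (hx : ReversesSign M x) : x = 0 := by
  classical
  by_contra hx0
  set g := (Finset.univ.filter fun i => x i ≠ 0).orderEmbOfFin rfl
  have hsupp : ∀ i ∉ Set.range g, x i = 0 := by simp [g, Finset.range_orderEmbOfFin]
  have hxg : ∀ j, x (g j) ≠ 0 := fun j => (Finset.mem_filter.1 (Finset.orderEmbOfFin_mem _ rfl j)).2
  have hne : x ∘ g ≠ 0 := fun h => hx0 <| funext fun i => by
    by_cases hi : i ∈ Set.range g
    · obtain ⟨j, rfl⟩ := hi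
      exact congrFun h j
    · exact hsupp i hi
  -- `d i = -(M *ᵥ x) i / x i` on the support, written so that `0 ≤ d i` is `hx i`.
  set d : Fin n → ℝ := fun i => -(x i * (M *ᵥ x) i) / x i ^ 2
  have hker : (M.submatrix g g + diagonal (d ∘ g)) *ᵥ (x ∘ g) = 0 := by
    rw [add_mulVec, submatrix_mulVec_comp M g.injective hsupp]
    ext j
    have := hxg j
    simp only [d, mulVec_diagonal, Function.comp_apply, Pi.add_apply, Pi.zero_apply]
    field_simp
    ring
  have hpos := (hM.submatrix g.injective).det_add_diagonal_pos
    (d := d ∘ g) fun j => div_nonneg (neg_nonneg.2 (hx _)) (sq_nonneg _)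
  exact hpos.ne' (exists_mulVec_eq_zero_iff.1 ⟨_, hne, hker⟩)

theorem solvesLCP_unique (hM : IsPMatrix M) (h₁ : SolvesLCP M q z₁) (h₂ : SolvesLCP M q z₂) :
    z₁ = z₂ :=
  sub_eq_zero.1 (hM.eq_zero_of_reversesSign (h₁.reversesSign_sub h₂))

theorem exists_norm_le_mul_norm (hM : IsPMatrix M) :
    ∃ C ≥ (0 : ℝ), ∀ q z, SolvesLCP M q z → ‖z‖ ≤ C * ‖q‖ := by
  by_contra! h
  choose q z hsol hlt using fun k : ℕ => h (k + 1) (by positivity)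
  have hz : ∀ k, 0 < ‖z k‖ := fun k => (by positivity : (0 : ℝ) ≤ (k + 1) * ‖q k‖).trans_lt (hlt k)
  -- Rescale to unit solutions; a limit point is a nonzero solution of `LCP(M, 0)`.
  obtain ⟨a, ha, φ, hφ, hu⟩ := (isCompact_sphere (0 : Fin n → ℝ) 1).tendsto_subseq
    (x := fun k => ‖z k‖⁻¹ • z k) fun k => by simp [norm_smul, (hz k).ne']
  have hv : Tendsto (fun k => ‖z k‖⁻¹ • q k) atTop (𝓝 0) := by
    refine squeeze_zero_norm (fun k => ?_) tendsto_one_div_add_atTop_nhds_zero_nat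
    rw [norm_smul, norm_inv, norm_norm, inv_mul_le_iff₀ (hz k), mul_one_div,
      le_div_iff₀ (by positivity), mul_comm]
    exact (hlt k).le
  have ha0 : SolvesLCP M 0 a := (isClosed_setOf_solvesLCP M).mem_of_tendsto
    ((hv.comp hφ.tendsto_atTop).prodMk_nhds hu)
    (Eventually.of_forall fun k => (hsol (φ k)).smul (inv_nonneg.2 (norm_nonneg _)))
  simp [hM.solvesLCP_unique ha0 solvesLCP_zero_zero] at ha

theorem continuous_of_solvesLCP (hM : IsPMatrix M) {S : (Fin n → ℝ) → Fin n → ℝ}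
    (hS : ∀ p, SolvesLCP M p (S p)) : Continuous S := by
  obtain ⟨C, hC, hCS⟩ := hM.exists_norm_le_mul_norm
  refine continuous_iff_seqContinuous.2 fun ps p hp => tendsto_of_subseq_tendsto fun ns hns => ?_
  obtain ⟨B, hB⟩ := hp.norm.bddAbove_range
  have hbdd : ∀ k, S (ps (ns k)) ∈ Metric.closedBall 0 (C * B) := fun k => by
    rw [mem_closedBall_zero_iff]
    exact (hCS _ _ (hS _)).trans (mul_le_mul_of_nonneg_left (hB ⟨ns k, rfl⟩) hC)
  obtain ⟨a, -, φ, hφ, ha⟩ := tendsto_subseq_of_bounded Metric.isBounded_closedBall hbdd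
  have hpa : SolvesLCP M p a := (isClosed_setOf_solvesLCP M).mem_of_tendsto
    ((hp.comp (hns.comp hφ.tendsto_atTop)).prodMk_nhds ha)
    (Eventually.of_forall fun k => hS _)
  exact ⟨φ, hM.solvesLCP_unique hpa (hS p) ▸ ha⟩

theorem mulVec_snoc_one_last_pos {M : Matrix (Fin (n + 1)) (Fin (n + 1)) ℝ} (hM : IsPMatrix M)
    {ζ : Fin n → ℝ} (hζ : SolvesLCP (M.submatrix Fin.castSucc Fin.castSucc)
      (Fin.init fun i => M i (Fin.last n)) ζ) :
    0 < (M *ᵥ Fin.snoc ζ 1) (Fin.last n) := by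
  have hx : Fin.snoc ζ 1 ≠ (0 : Fin (n + 1) → ℝ) := fun h => by
    simpa using congrFun h (Fin.last n)
  obtain ⟨i, hi⟩ : ∃ i, 0 < (Fin.snoc ζ 1 : Fin (n + 1) → ℝ) i * (M *ᵥ Fin.snoc ζ 1) i := by
    by_contra! h
    exact hx (hM.eq_zero_of_reversesSign h)
  induction i using Fin.lastCases with
  | last => simpa using hi
  | cast j =>
    obtain ⟨-, -, hζj⟩ := solvesLCP_iff.1 hζ j
    rw [Fin.snoc_castSucc, mulVec_snoc_castSucc, mul_one, add_comm, mul_comm] at hi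
    exact absurd hζj hi.ne'

theorem exists_solvesLCP_of_submatrix {M : Matrix (Fin (n + 1)) (Fin (n + 1)) ℝ}
    (hM : IsPMatrix M) {S : (Fin n → ℝ) → Fin n → ℝ}
    (hS : ∀ p, SolvesLCP (M.submatrix Fin.castSucc Fin.castSucc) p (S p))
    (q : Fin (n + 1) → ℝ) : ∃ z, SolvesLCP M q z := by
  have hMb := hM.submatrix (Fin.castSucc_injective n)
  have hSc := hMb.continuous_of_solvesLCP hS
  set c : Fin n → ℝ := Fin.init fun i => M i (Fin.last n)
  set F : ℝ → ℝ := fun t => q (Fin.last n) + (M *ᵥ Fin.snoc (S (Fin.init q + t • c)) t) (Fin.last n)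
  suffices ∃ t ≥ 0, 0 ≤ F t ∧ F t * t = 0 by
    obtain ⟨t, ht, hFt, hFtt⟩ := this
    exact ⟨_, (hS _).snoc ht hFt hFtt⟩
  by_cases hF0 : 0 ≤ F 0
  · exact ⟨0, le_rfl, hF0, mul_zero _⟩
  have hFc : Continuous F := by
    simp only [F, mulVec_snoc]
    fun_prop
  -- Homogeneity of `S` turns the behaviour of `F` at `∞` into that of `G` at `0`.
  set G : ℝ → ℝ := fun s =>
    s * q (Fin.last n) + (M *ᵥ Fin.snoc (S (s • Fin.init q + c)) 1) (Fin.last n)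
  have hFG : ∀ t > 0, F t = t * G t⁻¹ := fun t ht => by
    have hSt : S (Fin.init q + t • c) = t • S (t⁻¹ • Fin.init q + c) := by
      refine hMb.solvesLCP_unique (hS _) ?_
      convert (hS _).smul ht.le using 1
      rw [smul_add, smul_smul, mul_inv_cancel₀ ht.ne', one_smul]
    simp only [F, G, hSt, mulVec_snoc, Pi.smul_apply, smul_eq_mul]
    rw [mul_add, mul_add, ← mul_assoc, mul_inv_cancel₀ ht.ne', Finset.mul_sum]
    simp only [mul_left_comm t]
    ring
  have hG0 : 0 < G 0 := by simpa [G] using hM.mulVec_snoc_one_last_pos (hS c)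
  have hGc : Continuous G := by
    simp only [G, mulVec_snoc]
    fun_prop
  obtain ⟨T, hGT, hT⟩ := ((((hGc.tendsto 0).comp tendsto_inv_atTop_zero).eventually
    (eventually_gt_nhds hG0)).and (eventually_gt_atTop 0)).exists
  have hFT : 0 < F T := (hFG T hT).symm ▸ mul_pos hT hGT
  obtain ⟨t, ht, hFt⟩ := intermediate_value_Icc hT.le hFc.continuousOn ⟨(not_le.1 hF0).le, hFT.le⟩
  exact ⟨t, ht.1, hFt.ge, by rw [hFt, zero_mul]⟩

theorem exists_solvesLCP : ∀ {n : ℕ} {M : Matrix (Fin n) (Fin n) ℝ}, IsPMatrix M →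
    ∀ q, ∃ z, SolvesLCP M q z
  | 0, _, _, _ => ⟨0, by simp [SolvesLCP]⟩
  | _ + 1, _, hM, q => by
    choose S hS using exists_solvesLCP (hM.submatrix (Fin.castSucc_injective _))
    exact hM.exists_solvesLCP_of_submatrix hS q

end IsPMatrix

theorem exists_reversesSign_of_not_isPMatrix (hM : ¬IsPMatrix M) : ∃ x ≠ 0, ReversesSign M x := by
  classical
  obtain ⟨s, hs, hdet⟩ : ∃ s : Finset (Fin n), s.Nonempty ∧
      (M.submatrix (fun i : s => (i : Fin n)) (fun j : s => (j : Fin n))).det ≤ 0 := by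
    simpa [IsPMatrix] using hM
  have := hs.to_subtype
  obtain ⟨μ, hμ, y, hy, hAy⟩ := exists_mulVec_eq_smul_of_det_nonpos hdet
  set x := Function.extend ((↑) : s → Fin n) y 0
  have hxy : x ∘ (↑) = y := funext fun j => Subtype.val_injective.extend_apply _ _ j
  have hsupp : ∀ i ∉ Set.range ((↑) : s → Fin n), x i = 0 := fun i hi => by
    simp [x, Function.extend_apply' _ _ _ hi]
  have hMx : (M *ᵥ x) ∘ (↑) = μ • y := by
    rw [← submatrix_mulVec_comp M Subtype.val_injective hsupp, hxy, hAy]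
  refine ⟨x, fun h => hy (by rw [← hxy, h]; rfl), fun i => ?_⟩
  by_cases hi : i ∈ Set.range ((↑) : s → Fin n)
  · obtain ⟨j, rfl⟩ := hi
    rw [← Function.comp_apply (f := x), ← Function.comp_apply (f := M *ᵥ x), hxy, hMx,
      Pi.smul_apply, smul_eq_mul, mul_left_comm]
    exact mul_nonpos_of_nonpos_of_nonneg hμ (mul_self_nonneg _)
  · rw [hsupp i hi, zero_mul]

theorem stmt5 {n : ℕ} (M : Matrix (Fin n) (Fin n) ℝ) :
    IsPMatrix M ↔ ∀ q : Fin n → ℝ, ∃! z : Fin n → ℝ, SolvesLCP M q z := by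
  refine ⟨fun hM q => ?_, fun h => ?_⟩
  · obtain ⟨z, hz⟩ := hM.exists_solvesLCP q
    exact ⟨z, hz, fun y hy => hM.solvesLCP_unique hy hz⟩
  · by_contra hM
    obtain ⟨x, hx, hrev⟩ := exists_reversesSign_of_not_isPMatrix hM
    refine hx ?_
    rw [← posPart_sub_negPart x, (h _).unique hrev.solvesLCP_posPart hrev.solvesLCP_negPart,
      sub_self]
end

section
/- Let M̲ ≤ M̄ be n×n real matrices and q̲ ≤ q̄ be vectors in ℝⁿ (entrywise), and let w, z ∈ ℝⁿ with z ≥ 0. Then there exist a matrix M with M̲ ≤ M ≤ M̄ entrywise and a vector q with q̲ ≤ q ≤ q̄ entrywise such that w − M z = q, if and only if for every index i one has w_i − Σ_{j=1}^{n} m̄_{ij} z_j ≤ q̄_i and q̲_i ≤ w_i − Σ_{j=1}^{n} m̲_{ij} z_j. -/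
/-!
Row by row, the values of `m ⬝ᵥ z` for `m` in the box `[l, u]` fill the whole interval
`[l ⬝ᵥ z, u ⬝ᵥ z]` (the box is connected and the map is continuous). So row `i` is feasible
exactly when the interval `[w i - Mu i ⬝ᵥ z, w i - Ml i ⬝ᵥ z]` meets `[ql i, qu i]`.
-/

open Set Matrix

theorem exists_mem_Icc_dotProduct_eq {ι : Type*} [Fintype ι] {l u : ι → ℝ} (z : ι → ℝ)
    (hlu : l ≤ u) {v : ℝ} (hv : v ∈ Icc (l ⬝ᵥ z) (u ⬝ᵥ z)) :
    ∃ m ∈ Icc l u, m ⬝ᵥ z = v :=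
  (convex_Icc l u).isPreconnected.intermediate_value (left_mem_Icc.2 hlu) (right_mem_Icc.2 hlu)
    (by fun_prop : Continuous fun m : ι → ℝ => m ⬝ᵥ z).continuousOn hv

theorem exists_mem_Icc_sub_dotProduct_eq {ι : Type*} [Fintype ι] {l u z : ι → ℝ} {a b c : ℝ}
    (hlu : l ≤ u) (hz : 0 ≤ z) (hab : a ≤ b) (hu : c - u ⬝ᵥ z ≤ b) (hl : a ≤ c - l ⬝ᵥ z) :
    ∃ m ∈ Icc l u, ∃ q ∈ Icc a b, c - m ⬝ᵥ z = q := by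
  have hlu_z : l ⬝ᵥ z ≤ u ⬝ᵥ z := dotProduct_le_dotProduct_of_nonneg_right hlu hz
  set q := max a (c - u ⬝ᵥ z)
  have hq_le : q ≤ c - l ⬝ᵥ z := max_le hl (by linarith)
  have hq_ge : c - u ⬝ᵥ z ≤ q := le_max_right _ _
  obtain ⟨m, hm, hmz⟩ := exists_mem_Icc_dotProduct_eq (v := c - q) z hlu
    ⟨by linarith, by linarith⟩
  exact ⟨m, hm, q, ⟨le_max_left _ _, max_le hab hu⟩, by linarith⟩

theorem stmt6 {n : ℕ} (Ml Mu : Matrix (Fin n) (Fin n) ℝ) (ql qu w z : Fin n → ℝ)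
    (hM : ∀ i j, Ml i j ≤ Mu i j) (hq : ∀ i, ql i ≤ qu i) (hz : ∀ i, 0 ≤ z i) :
    (∃ (M : Matrix (Fin n) (Fin n) ℝ) (q : Fin n → ℝ),
      (∀ i j, Ml i j ≤ M i j ∧ M i j ≤ Mu i j) ∧ (∀ i, ql i ≤ q i ∧ q i ≤ qu i) ∧
      (∀ i, w i - M.mulVec z i = q i)) ↔
    (∀ i, w i - ∑ j, Mu i j * z j ≤ qu i ∧ ql i ≤ w i - ∑ j, Ml i j * z j) := by
  change _ ↔ ∀ i, w i - Mu i ⬝ᵥ z ≤ qu i ∧ ql i ≤ w i - Ml i ⬝ᵥ z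
  constructor
  · rintro ⟨M, q, hMb, hqb, heq⟩ i
    have hMu : M i ⬝ᵥ z ≤ Mu i ⬝ᵥ z :=
      dotProduct_le_dotProduct_of_nonneg_right (fun j => (hMb i j).2) hz
    have hMl : Ml i ⬝ᵥ z ≤ M i ⬝ᵥ z :=
      dotProduct_le_dotProduct_of_nonneg_right (fun j => (hMb i j).1) hz
    have hqi : w i - M i ⬝ᵥ z = q i := heq i
    exact ⟨by linarith [(hqb i).2], by linarith [(hqb i).1]⟩
  · intro h
    choose M hMb q hqb heq using fun i =>
      exists_mem_Icc_sub_dotProduct_eq (hM i) hz (hq i) (h i).1 (h i).2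
    exact ⟨M, q, fun i j => ⟨(hMb i).1 j, (hMb i).2 j⟩, hqb, heq⟩
end

section
/- Let z₁ > 0, z₂ > 0 and z₃ ≥ 0 be real numbers, and suppose the real numbers m₁₁, m₁₃, m₂₂, m₂₃, m₁₂ satisfy m̲₁₁ ≤ m₁₁ ≤ m̄₁₁, m̲₁₃ ≤ m₁₃ ≤ m̄₁₃, m̲₂₂ ≤ m₂₂ ≤ m̄₂₂, m̲₂₃ ≤ m₂₃ ≤ m̄₂₃, together with q̲₁ ≤ −m₁₁ z₁ − m₁₂ z₂ − m₁₃ z₃ ≤ q̄₁ and q̲₂ ≤ −m₁₂ z₁ − m₂₂ z₂ − m₂₃ z₃ ≤ q̄₂. Then 0 ≤ m̄₂₂ z₂² + m̄₂₃ z₂ z₃ + q̄₂ z₂ − m̲₁₁ z₁² − m̲₁₃ z₁ z₃ − q̲₁ z₁ and 0 ≤ m̄₁₁ z₁² + m̄₁₃ z₁ z₃ + q̄₁ z₁ − m̲₂₂ z₂² − m̲₂₃ z₂ z₃ − q̲₂ z₂. -/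
/-- Weighting the bound on row 1 by `x` and that on row 2 by `y`, the off-diagonal entry `s`
contributes `s * x * y` to both and cancels; the remaining terms are compared with the interval
endpoints. -/
theorem row_bound_gap_nonneg {x y w s a aₗ b bᵤ c cₗ d dᵤ pₗ qᵤ : ℝ}
    (hx : 0 ≤ x) (hy : 0 ≤ y) (hw : 0 ≤ w)
    (ha : aₗ ≤ a) (hb : b ≤ bᵤ) (hc : cₗ ≤ c) (hd : d ≤ dᵤ)
    (hp : pₗ ≤ -a * x - s * y - c * w) (hq : -s * x - b * y - d * w ≤ qᵤ) :
    0 ≤ bᵤ * y ^ 2 + dᵤ * y * w + qᵤ * y - aₗ * x ^ 2 - cₗ * x * w - pₗ * x := by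
  have hpx := mul_le_mul_of_nonneg_right hp hx
  have hqy := mul_le_mul_of_nonneg_right hq hy
  have hax := mul_le_mul_of_nonneg_right ha (sq_nonneg x)
  have hby := mul_le_mul_of_nonneg_right hb (sq_nonneg y)
  have hcxw := mul_le_mul_of_nonneg_right hc (mul_nonneg hx hw)
  have hdyw := mul_le_mul_of_nonneg_right hd (mul_nonneg hy hw)
  linear_combination hpx + hqy + hax + hby + hcxw + hdyw

theorem stmt8 (z₁ z₂ z₃ : ℝ) (hz₁ : 0 < z₁) (hz₂ : 0 < z₂) (hz₃ : 0 ≤ z₃)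
    (ml₁₁ mu₁₁ ml₁₃ mu₁₃ ml₂₂ mu₂₂ ml₂₃ mu₂₃ ql₁ qu₁ ql₂ qu₂ m₁₁ m₁₃ m₂₂ m₂₃ m₁₂ : ℝ)
    (h₁₁ : ml₁₁ ≤ m₁₁ ∧ m₁₁ ≤ mu₁₁) (h₁₃ : ml₁₃ ≤ m₁₃ ∧ m₁₃ ≤ mu₁₃)
    (h₂₂ : ml₂₂ ≤ m₂₂ ∧ m₂₂ ≤ mu₂₂) (h₂₃ : ml₂₃ ≤ m₂₃ ∧ m₂₃ ≤ mu₂₃)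
    (hq₁ : ql₁ ≤ -m₁₁ * z₁ - m₁₂ * z₂ - m₁₃ * z₃ ∧ -m₁₁ * z₁ - m₁₂ * z₂ - m₁₃ * z₃ ≤ qu₁)
    (hq₂ : ql₂ ≤ -m₁₂ * z₁ - m₂₂ * z₂ - m₂₃ * z₃ ∧ -m₁₂ * z₁ - m₂₂ * z₂ - m₂₃ * z₃ ≤ qu₂) :
    0 ≤ mu₂₂ * z₂ ^ 2 + mu₂₃ * z₂ * z₃ + qu₂ * z₂ - ml₁₁ * z₁ ^ 2 - ml₁₃ * z₁ * z₃ - ql₁ * z₁ ∧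
    0 ≤ mu₁₁ * z₁ ^ 2 + mu₁₃ * z₁ * z₃ + qu₁ * z₁ - ml₂₂ * z₂ ^ 2 - ml₂₃ * z₂ * z₃ - ql₂ * z₂ := by
  constructor
  · exact row_bound_gap_nonneg hz₁.le hz₂.le hz₃ h₁₁.1 h₂₂.2 h₁₃.1 h₂₃.2 hq₁.1 hq₂.2
  · exact row_bound_gap_nonneg (s := m₁₂) hz₂.le hz₁.le hz₃ h₂₂.1 h₁₁.2 h₂₃.1 h₁₃.2
      (by linarith [hq₂.1]) (by linarith [hq₁.2])
end

section
/- Let a > 0 and b > 0 be real numbers and let c, d be real numbers with c·d ≠ 0. Then the symmetric 3×3 real matrix A with rows (−a, 0, −c/2), (0, b, d/2), (−c/2, d/2, 0) has three pairwise distinct real eigenvalues λ₁ < λ₂ < λ₃ satisfying λ₁ < −a < λ₂ < b < λ₃; in particular λ₁ < 0 < λ₃. -/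
/-!
The characteristic polynomial `χ(μ) = det (μ - A) = (μ + a)(μ - b)μ - c²/4 (μ - b) - d²/4 (μ + a)`
is a monic cubic with `χ(-a) = c²(a + b)/4 > 0` and `χ(b) = -d²(a + b)/4 < 0`, so by the
intermediate value theorem it has a root in each of `(-∞, -a)`, `(-a, b)` and `(b, ∞)`.
-/

open Polynomial Filter

theorem Polynomial.Monic.tendsto_eval_atBot_atBot_of_odd {P : ℝ[X]} (hP : P.Monic)
    (hodd : Odd P.natDegree) : Tendsto (fun x => P.eval x) atBot atBot := by
  have hdeg : 0 < (P.comp (-X)).degree := by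
    rw [degree_comp_neg_X, ← natDegree_pos_iff_degree_pos]
    exact hodd.pos
  have hlead : (P.comp (-X)).leadingCoeff ≤ 0 := by
    simp [hP.leadingCoeff, hodd.neg_one_pow]
  have := (tendsto_atBot_of_leadingCoeff_nonpos _ hdeg hlead).comp tendsto_neg_atBot_atTop
  simpa [Function.comp_def] using this

theorem exists_three_zeros_of_tendsto {f : ℝ → ℝ} (hf : Continuous f)
    (hbot : Tendsto f atBot atBot) (htop : Tendsto f atTop atTop) {p q : ℝ} (hpq : p ≤ q)
    (hp : 0 < f p) (hq : f q < 0) :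
    ∃ x₁ x₂ x₃, f x₁ = 0 ∧ f x₂ = 0 ∧ f x₃ = 0 ∧ x₁ < p ∧ p < x₂ ∧ x₂ < q ∧ q < x₃ := by
  obtain ⟨L, hfL, hLp⟩ :=
    ((hbot.eventually (eventually_lt_atBot 0)).and (eventually_lt_atBot p)).exists
  obtain ⟨R, hfR, hqR⟩ :=
    ((htop.eventually (eventually_gt_atTop 0)).and (eventually_gt_atTop q)).exists
  obtain ⟨x₁, ⟨-, hx₁p⟩, hx₁⟩ := intermediate_value_Ioo hLp.le hf.continuousOn ⟨hfL, hp⟩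
  obtain ⟨x₂, ⟨hpx₂, hx₂q⟩, hx₂⟩ := intermediate_value_Ioo' hpq hf.continuousOn ⟨hq, hp⟩
  obtain ⟨x₃, ⟨hqx₃, -⟩, hx₃⟩ := intermediate_value_Ioo hqR.le hf.continuousOn ⟨hq, hfR⟩
  exact ⟨x₁, x₂, x₃, hx₁, hx₂, hx₃, hx₁p, hpx₂, hx₂q, hqx₃⟩

theorem Matrix.exists_three_hasEigenvalue_of_charpoly_eval {n : Type*} [Fintype n]
    [DecidableEq n] (A : Matrix n n ℝ) (hodd : Odd (Fintype.card n)) {p q : ℝ} (hpq : p ≤ q)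
    (hp : 0 < A.charpoly.eval p) (hq : A.charpoly.eval q < 0) :
    ∃ x₁ x₂ x₃, Module.End.HasEigenvalue A.toLin' x₁ ∧ Module.End.HasEigenvalue A.toLin' x₂ ∧
      Module.End.HasEigenvalue A.toLin' x₃ ∧ x₁ < p ∧ p < x₂ ∧ x₂ < q ∧ q < x₃ := by
  simp only [Module.End.hasEigenvalue_iff_isRoot_charpoly, charpoly_toLin', IsRoot.def]
  have hodd' : Odd A.charpoly.natDegree := by rwa [charpoly_natDegree_eq_dim]
  have hdeg : 0 < A.charpoly.degree := natDegree_pos_iff_degree_pos.1 hodd'.pos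
  exact exists_three_zeros_of_tendsto A.charpoly.continuous
    (A.charpoly_monic.tendsto_eval_atBot_atBot_of_odd hodd')
    (A.charpoly.tendsto_atTop_of_leadingCoeff_nonneg hdeg
      (A.charpoly_monic.leadingCoeff ▸ zero_le_one))
    hpq hp hq

theorem eval_charpoly_arrowhead (a b c d μ : ℝ) :
    (!![-a, 0, -c/2; 0, b, d/2; -c/2, d/2, 0]).charpoly.eval μ =
      (μ + a) * (μ - b) * μ - c ^ 2 / 4 * (μ - b) - d ^ 2 / 4 * (μ + a) := by
  rw [Matrix.eval_charpoly, Matrix.det_fin_three]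
  simp only [Matrix.scalar_apply, Matrix.sub_apply, Matrix.diagonal_apply, Matrix.of_apply,
    Matrix.cons_val', Matrix.cons_val_zero, Matrix.cons_val_one, Matrix.cons_val,
    Matrix.cons_val_fin_one, Fin.isValue, Fin.reduceEq, if_true, if_false]
  ring

theorem stmt10 (a b c d : ℝ) (ha : 0 < a) (hb : 0 < b) (hcd : c * d ≠ 0) :
    ∃ lam₁ lam₂ lam₃ : ℝ,
      Module.End.HasEigenvalue (Matrix.toLin' (!![-a, 0, -c/2; 0, b, d/2; -c/2, d/2, 0])) lam₁ ∧
      Module.End.HasEigenvalue (Matrix.toLin' (!![-a, 0, -c/2; 0, b, d/2; -c/2, d/2, 0])) lam₂ ∧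
      Module.End.HasEigenvalue (Matrix.toLin' (!![-a, 0, -c/2; 0, b, d/2; -c/2, d/2, 0])) lam₃ ∧
      lam₁ < lam₂ ∧ lam₂ < lam₃ ∧
      lam₁ < -a ∧ -a < lam₂ ∧ lam₂ < b ∧ b < lam₃ ∧
      lam₁ < 0 ∧ 0 < lam₃ := by
  set A : Matrix (Fin 3) (Fin 3) ℝ := !![-a, 0, -c/2; 0, b, d/2; -c/2, d/2, 0] with hA
  obtain ⟨hc, hd⟩ := mul_ne_zero_iff.1 hcd
  have h_eval_neg_a : A.charpoly.eval (-a) = c ^ 2 * (a + b) / 4 := by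
    rw [hA, eval_charpoly_arrowhead]; ring
  have h_eval_b : A.charpoly.eval b = -(d ^ 2 * (a + b) / 4) := by
    rw [hA, eval_charpoly_arrowhead]; ring
  obtain ⟨x₁, x₂, x₃, h₁, h₂, h₃, hx₁a, hax₂, hx₂b, hbx₃⟩ :=
    A.exists_three_hasEigenvalue_of_charpoly_eval (p := -a) (q := b) (by decide) (by linarith)
      (by rw [h_eval_neg_a]; positivity) (by rw [h_eval_b]; exact neg_neg_of_pos (by positivity))
  exact ⟨x₁, x₂, x₃, h₁, h₂, h₃, by linarith, by linarith, hx₁a, hax₂, hx₂b, hbx₃,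
    by linarith, by linarith⟩
end

section
/- Let [M] be the set of 2×2 real matrices M with m₁₁ ∈ [1/8, 1], m₁₂ ∈ [−1/4, −1/5], m₂₁ ∈ [−1/4, −1/5], m₂₂ = 1, and let [q] be the set of vectors q ∈ ℝ² with q₁ ∈ [−3, −1], q₂ ∈ [1, 2]. Then z = (100/3, 14/3) solves LCP(M, q) for M with rows (1/8, −1/4), (−1/5, 1) and q = (−3, 2), so z ∈ Σ([M],[q]); however, there exist no symmetric matrix M ∈ [M] and no vector q ∈ [q] such that z solves LCP(M, q), so z ∉ Σ_sym([M],[q]). -/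
/-- Membership of a 2×2 matrix in the interval matrix of Example 6.1.1. -/
def MemIntervalM (M : Matrix (Fin 2) (Fin 2) ℝ) : Prop :=
  M 0 0 ∈ Set.Icc (1/8 : ℝ) 1 ∧ M 0 1 ∈ Set.Icc (-(1/4) : ℝ) (-(1/5)) ∧
  M 1 0 ∈ Set.Icc (-(1/4) : ℝ) (-(1/5)) ∧ M 1 1 = 1

/-- Membership of a vector in the interval vector of Example 6.1.1. -/
def MemIntervalQ (q : Fin 2 → ℝ) : Prop :=
  q 0 ∈ Set.Icc (-3 : ℝ) (-1) ∧ q 1 ∈ Set.Icc (1 : ℝ) 2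

/-!
Both claims come down to the observation that a solution `z` with all entries positive forces
`q + M z = 0` by complementarity. For the nonsymmetric matrix this equation holds exactly. A
symmetric `M` has `m₁₂ = m₂₁ =: b`; the second row gives `q₂ = -(100 b + 14) / 3`, and `q₂ ≤ 2`
forces `b = -1/5`. The first row then gives `q₁ = 14/15 - 100 m₁₁ / 3 ≤ 14/15 - 25/6 < -3`.
-/

namespace SolvesLCP

variable {n : ℕ} {M : Matrix (Fin n) (Fin n) ℝ} {q z : Fin n → ℝ}

theorem of_add_mulVec_eq_zero (hw : ∀ i, q i + M.mulVec z i = 0) (hz : ∀ i, 0 ≤ z i) :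
    SolvesLCP M q z :=
  ⟨fun i => (hw i).ge, hz, by simp [hw]⟩

theorem add_mulVec_mul_eq_zero (h : SolvesLCP M q z) (i : Fin n) :
    (q i + M.mulVec z i) * z i = 0 :=
  (Finset.sum_eq_zero_iff_of_nonneg fun j _ => mul_nonneg (h.1 j) (h.2.1 j)).1 h.2.2 i
    (Finset.mem_univ i)

theorem add_mulVec_eq_zero_of_pos (h : SolvesLCP M q z) (hz : ∀ i, 0 < z i) (i : Fin n) :
    q i + M.mulVec z i = 0 :=
  (mul_eq_zero.1 (h.add_mulVec_mul_eq_zero i)).resolve_right (hz i).ne'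

end SolvesLCP

theorem stmt12 :
    (SolvesLCP !![(1/8 : ℝ), -(1/4); -(1/5), 1] ![-3, 2] ![100/3, 14/3] ∧
      MemIntervalM !![(1/8 : ℝ), -(1/4); -(1/5), 1] ∧ MemIntervalQ ![-3, 2]) ∧
    ¬ ∃ (M : Matrix (Fin 2) (Fin 2) ℝ) (q : Fin 2 → ℝ),
        MemIntervalM M ∧ M.IsSymm ∧ MemIntervalQ q ∧
        SolvesLCP M q ![100/3, 14/3] := by
  refine ⟨⟨.of_add_mulVec_eq_zero ?_ ?_, ?_, ?_⟩, ?_⟩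
  · intro i
    fin_cases i <;> norm_num [Matrix.mulVec, dotProduct, Fin.sum_univ_two]
  · intro i
    fin_cases i <;> norm_num
  · norm_num [MemIntervalM]
  · norm_num [MemIntervalQ]
  · rintro ⟨M, q, ⟨⟨hm₁₁, -⟩, -, ⟨hb, -⟩, hm₂₂⟩, hsymm, ⟨⟨hq₁, -⟩, -, hq₂⟩, hsol⟩
    have hrow := hsol.add_mulVec_eq_zero_of_pos (by intro i; fin_cases i <;> norm_num)
    have hrow₁ := hrow 0
    have hrow₂ := hrow 1
    simp only [Matrix.mulVec, dotProduct, Fin.sum_univ_two] at hrow₁ hrow₂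
    norm_num [hsymm.apply 1 0, hm₂₂] at hrow₁ hrow₂
    linarith
end

section
/- Let [M] be the set of 2×2 real matrices M with m₁₁ ∈ [1/8, 1], m₁₂ ∈ [−1/4, −1/5], m₂₁ ∈ [−1/4, −1/5], m₂₂ = 1, and let [q] be the set of vectors q ∈ ℝ² with q₁ ∈ [−3, −1], q₂ ∈ [1, 2]. Then every vector z that solves LCP(M, q) for some M ∈ [M] and q ∈ [q] satisfies (1, 0) ≤ z ≤ (44, 10) entrywise; moreover (1, 0) solves LCP(M̄, q̄) with M̄ having rows (1, −1/5), (−1/5, 1) and q̄ = (−1, 2), and (44, 10) solves LCP(M̲, q̲) with M̲ having rows (1/8, −1/4), (−1/4, 1) and q̲ = (−3, 1). -/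
/-! Every `M ∈ [M]` has negative off-diagonal entries and `q 0 < 0`, so `z 0 = 0` would give
`(q + M z) 0 ≤ q 0 < 0`; hence `z 0 > 0` and complementarity makes the first row an equation. It
yields `1 ≤ z 0 ≤ 24 + 2 z 1`. If `z 1 > 0` the second row is an equation too, giving
`z 1 ≤ z 0 / 4 - 1`, and the two linear bounds combine to `z 0 ≤ 44`, `z 1 ≤ 10`. -/

theorem solvesLCP_iff_forall {n : ℕ} (M : Matrix (Fin n) (Fin n) ℝ) (q z : Fin n → ℝ) :
    SolvesLCP M q z ↔
      ∀ i, 0 ≤ q i + M.mulVec z i ∧ 0 ≤ z i ∧ (q i + M.mulVec z i) * z i = 0 := by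
  constructor
  · rintro ⟨hw, hz, hsum⟩ i
    have hprod := (Finset.sum_eq_zero_iff_of_nonneg fun j _ => mul_nonneg (hw j) (hz j)).mp hsum
    exact ⟨hw i, hz i, hprod i (Finset.mem_univ i)⟩
  · intro h
    exact ⟨fun i => (h i).1, fun i => (h i).2.1, Finset.sum_eq_zero fun i _ => (h i).2.2⟩

theorem SolvesLCP.complementarity {n : ℕ} {M : Matrix (Fin n) (Fin n) ℝ} {q z : Fin n → ℝ}
    (hz : SolvesLCP M q z) (i : Fin n) : (q i + M.mulVec z i) * z i = 0 :=
  ((solvesLCP_iff_forall M q z).mp hz i).2.2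

namespace MemIntervalM

variable {M : Matrix (Fin 2) (Fin 2) ℝ} {q z : Fin 2 → ℝ}
  (hM : MemIntervalM M) (hq : MemIntervalQ q) (hz : SolvesLCP M q z)
include hM hq hz

theorem solvesLCP_first_pos : 0 < z 0 := by
  obtain ⟨-, ⟨-, hM01⟩, -, -⟩ := hM
  have hw0 := hz.1 0
  have hz1 := hz.2.1 1
  simp only [Matrix.mulVec_fin_two, Matrix.cons_val_zero] at hw0
  refine (hz.2.1 0).lt_of_ne fun h => ?_
  rw [← h] at hw0
  nlinarith [hq.1.2]

theorem solvesLCP_first_row : M 0 0 * z 0 + M 0 1 * z 1 = -q 0 := by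
  have h := (mul_eq_zero.mp (hz.complementarity 0)).resolve_right
    (solvesLCP_first_pos hM hq hz).ne'
  simp only [Matrix.mulVec_fin_two, Matrix.cons_val_zero] at h
  linarith

theorem solvesLCP_one_le_first : 1 ≤ z 0 := by
  have hrow := solvesLCP_first_row hM hq hz
  obtain ⟨⟨-, hM00⟩, ⟨-, hM01⟩, -, -⟩ := hM
  nlinarith [hz.2.1 0, hz.2.1 1, hq.1.2]

theorem solvesLCP_first_le : z 0 ≤ 24 + 2 * z 1 := by
  have hrow := solvesLCP_first_row hM hq hz
  obtain ⟨⟨hM00, -⟩, ⟨hM01, -⟩, -, -⟩ := hM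
  nlinarith [hz.2.1 0, hz.2.1 1, hq.1.1]

theorem solvesLCP_second_le (hz1 : z 1 ≠ 0) : z 1 ≤ z 0 / 4 - 1 := by
  have h := (mul_eq_zero.mp (hz.complementarity 1)).resolve_right hz1
  simp only [Matrix.mulVec_fin_two, Matrix.cons_val_one, Matrix.cons_val_zero] at h
  obtain ⟨-, -, ⟨hM10, -⟩, hM11⟩ := hM
  rw [hM11] at h
  nlinarith [hz.2.1 0, hq.2.1]

theorem solvesLCP_le_bounds : z 0 ≤ 44 ∧ z 1 ≤ 10 := by
  have h0 := solvesLCP_first_le hM hq hz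
  by_cases hz1 : z 1 = 0
  · rw [hz1] at h0 ⊢
    constructor <;> linarith
  · have h1 := solvesLCP_second_le hM hq hz hz1
    constructor <;> linarith

end MemIntervalM

theorem stmt13 :
    (∀ (M : Matrix (Fin 2) (Fin 2) ℝ) (q z : Fin 2 → ℝ),
      MemIntervalM M → MemIntervalQ q → SolvesLCP M q z →
      (∀ i, (![1, 0] : Fin 2 → ℝ) i ≤ z i) ∧ (∀ i, z i ≤ (![44, 10] : Fin 2 → ℝ) i)) ∧
    SolvesLCP !![(1 : ℝ), -(1/5); -(1/5), 1] ![-1, 2] ![1, 0] ∧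
    SolvesLCP !![(1/8 : ℝ), -(1/4); -(1/4), 1] ![-3, 1] ![44, 10] := by
  refine ⟨fun M q z hM hq hz => ?_, ?_, ?_⟩
  · obtain ⟨h0, h1⟩ := hM.solvesLCP_le_bounds hq hz
    exact ⟨Fin.forall_fin_two.mpr ⟨hM.solvesLCP_one_le_first hq hz, hz.2.1 1⟩,
      Fin.forall_fin_two.mpr ⟨h0, h1⟩⟩
  all_goals
    rw [solvesLCP_iff_forall, Fin.forall_fin_two]
    norm_num
end
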